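/- Let H = X₁X₂³Y₂³ + Y₁(X₂⁴Y₂² + X₂²Y₂⁴) ∈ V_{1,6}. Then the linear map T^{(1,2)}(H, •) : V_{1,2} → V_{0,4} is surjective; equivalently, since dim V_{1,2} = 6 = dim V_{0,4} + 1, its kernel is one-dimensional. -/

import Mathlib

/-! In the monomial coordinates `p, q ∈ ℂ³` of `(P, Q) ∈ V₂ × V₂` (the `k`-th coordinate being the
coefficient of `X^k Y^(n-k)`), `T^{(1,2)}(H, (P, Q))` is the quartic with coordinates
`(-4p₀, 12q₀ + 16p₁, -18q₁ - 24(p₀ + p₂), 12q₂ + 16p₁, -4p₂)`. This linear system in six unknowns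
is visibly of rank five, and its kernel is spanned by `p = (0, 3, 0)`, `q = (-4, 0, -4)`. -/

set_option synthInstance.maxHeartbeats 1000000
set_option maxHeartbeats 1000000
noncomputable section
open MvPolynomial

/-- The `r`-th transvectant `T^(r) : V_d × V_{d'} → V_{d+d'-2r}` of binary forms (in the
variables `X = X 0`, `Y = X 1`), as a bilinear map:
`T^(r)(P, P') = ∑_{i=0}^{r} (-1)^i C(r,i) (∂^r P/∂X^(r-i)∂Y^i) (∂^r P'/∂X^i ∂Y^(r-i))`. -/
def transvBil (r : ℕ) :
    MvPolynomial (Fin 2) ℂ →ₗ[ℂ] MvPolynomial (Fin 2) ℂ →ₗ[ℂ] MvPolynomial (Fin 2) ℂ :=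
  ∑ i ∈ Finset.range (r + 1),
    ((-1 : ℂ) ^ i * (r.choose i : ℂ)) •
      (LinearMap.mul ℂ (MvPolynomial (Fin 2) ℂ)).compl₁₂
        (((pderiv (0 : Fin 2)).toLinearMap ^ (r - i)) * ((pderiv (1 : Fin 2)).toLinearMap ^ i))
        (((pderiv (0 : Fin 2)).toLinearMap ^ i) * ((pderiv (1 : Fin 2)).toLinearMap ^ (r - i)))

/-- The `(1,s)`-th transvectant `T^{(1,s)} : V_{1,b} × V_{1,b'} → V_{0,b+b'-2s}` for biforms,
where an element `X₁ ⊗ P + Y₁ ⊗ Q` of `V_{1,b} = V_1 ⊗ V_b` is recorded as the pair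
`(P, Q)` of binary forms of degree `b` in `(X₂, Y₂)`:
`T^{(1,s)}((P,Q), (P',Q')) = T^(s)(P, Q') - T^(s)(Q, P')`. -/
def transv1 (s : ℕ) :
    (MvPolynomial (Fin 2) ℂ × MvPolynomial (Fin 2) ℂ) →ₗ[ℂ]
      (MvPolynomial (Fin 2) ℂ × MvPolynomial (Fin 2) ℂ) →ₗ[ℂ] MvPolynomial (Fin 2) ℂ :=
  (transvBil s).compl₁₂ (LinearMap.fst ℂ _ _) (LinearMap.snd ℂ _ _) -
    (transvBil s).compl₁₂ (LinearMap.snd ℂ _ _) (LinearMap.fst ℂ _ _)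

lemma X_pow_mul_X_pow_eq_monomial {σ R : Type*} [CommSemiring R] (i j : σ) (a b : ℕ) :
    (X i ^ a * X j ^ b : MvPolynomial σ R) =
      monomial (Finsupp.single i a + Finsupp.single j b) 1 := by
  rw [X_pow_eq_monomial, X_pow_eq_monomial, monomial_mul, one_mul]

section BinaryForm

variable (R : Type*) [CommSemiring R]

def binaryForm (n : ℕ) : (Fin (n + 1) → R) →ₗ[R] MvPolynomial (Fin 2) R :=
  Fintype.linearCombination R fun k => X 0 ^ (k : ℕ) * X 1 ^ (n - k)

lemma binaryForm_apply (n : ℕ) (c : Fin (n + 1) → R) :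
    binaryForm R n c = ∑ k, c k • (X 0 ^ (k : ℕ) * X 1 ^ (n - k)) :=
  rfl

lemma binaryForm_injective (n : ℕ) : Function.Injective (binaryForm R n) := by
  have hexponent : Function.Injective fun k : Fin (n + 1) =>
      Finsupp.single (0 : Fin 2) (k : ℕ) + Finsupp.single 1 (n - k) := by
    intro k l hkl
    simpa [Fin.ext_iff] using DFunLike.congr_fun hkl 0
  refine LinearIndependent.fintypeLinearCombination_injective ?_
  simpa only [X_pow_mul_X_pow_eq_monomial, coe_basisMonomials, Function.comp_def] using
    (basisMonomials (Fin 2) R).linearIndependent.comp _ hexponent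

lemma range_binaryForm (n : ℕ) :
    LinearMap.range (binaryForm R n) = homogeneousSubmodule (Fin 2) R n := by
  rw [binaryForm, Fintype.range_linearCombination, homogeneousSubmodule_eq_finsupp_supported,
    AddMonoidAlgebra.supported_eq_span_single]
  congr 1
  ext P
  simp only [Set.mem_range, Set.mem_image, Set.mem_ofPred_eq, X_pow_mul_X_pow_eq_monomial]
  constructor
  · rintro ⟨k, rfl⟩
    exact ⟨_, by simp only [map_add, Finsupp.degree_single]; omega, rfl⟩
  · rintro ⟨m, hm, rfl⟩
    replace hm : m 0 + m 1 = n := by rw [← hm, Finsupp.degree_eq_sum, Fin.sum_univ_two]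
    refine ⟨⟨m 0, by omega⟩, congrArg (monomial · 1) ?_⟩
    ext i
    fin_cases i <;> simp [← hm]

variable {R}

lemma binaryForm_mem_homogeneousSubmodule {n : ℕ} (c : Fin (n + 1) → R) :
    binaryForm R n c ∈ homogeneousSubmodule (Fin 2) R n :=
  range_binaryForm R n ▸ LinearMap.mem_range_self _ c

end BinaryForm

local notation "𝓗" => (X 0 ^ 3 * X 1 ^ 3, X 0 ^ 4 * X 1 ^ 2 + X 0 ^ 2 * X 1 ^ 4)

lemma transv1_two_binaryForm (p q : Fin 3 → ℂ) :
    transv1 2 𝓗 (binaryForm ℂ 2 p, binaryForm ℂ 2 q) =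
      binaryForm ℂ 4 ![-4 * p 0, 12 * q 0 + 16 * p 1, -18 * q 1 - 24 * (p 0 + p 2),
        12 * q 2 + 16 * p 1, -4 * p 2] := by
  simp [binaryForm_apply, Fin.sum_univ_succ, transv1, transvBil, Finset.sum_range_succ, pow_succ,
    map_ofNat, smul_eq_C_mul]
  ring

lemma inf_ker_transv1_two_eq_span :
    (homogeneousSubmodule (Fin 2) ℂ 2).prod (homogeneousSubmodule (Fin 2) ℂ 2) ⊓
        LinearMap.ker (transv1 2 𝓗) =
      Submodule.span ℂ {(binaryForm ℂ 2 ![0, 3, 0], binaryForm ℂ 2 ![-4, 0, -4])} := by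
  apply le_antisymm
  · rintro ⟨P, Q⟩ ⟨⟨hP, hQ⟩, hPQ⟩
    obtain ⟨p, rfl⟩ := (range_binaryForm ℂ 2).ge hP
    obtain ⟨q, rfl⟩ := (range_binaryForm ℂ 2).ge hQ
    rw [SetLike.mem_coe, LinearMap.mem_ker, transv1_two_binaryForm,
      map_eq_zero_iff _ (binaryForm_injective ℂ 4)] at hPQ
    obtain ⟨h0, h1, h2, h3, h4⟩ : -4 * p 0 = 0 ∧ 12 * q 0 + 16 * p 1 = 0 ∧
        -18 * q 1 - 24 * (p 0 + p 2) = 0 ∧ 12 * q 2 + 16 * p 1 = 0 ∧ -4 * p 2 = 0 :=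
      ⟨congr_fun hPQ 0, congr_fun hPQ 1, congr_fun hPQ 2, congr_fun hPQ 3, congr_fun hPQ 4⟩
    refine Submodule.mem_span_singleton.2 ⟨p 1 / 3, ?_⟩
    rw [Prod.smul_mk, ← map_smul, ← map_smul]
    congr 2 <;> ext i <;> fin_cases i <;> simp
    · linear_combination h0 / 4
    · linear_combination h4 / 4
    · linear_combination -h1 / 12
    · linear_combination (h2 - 6 * h0 - 6 * h4) / 18
    · linear_combination -h3 / 12
  · rw [Submodule.span_le, Set.singleton_subset_iff]
    refine ⟨⟨binaryForm_mem_homogeneousSubmodule _, binaryForm_mem_homogeneousSubmodule _⟩, ?_⟩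
    rw [SetLike.mem_coe, LinearMap.mem_ker, transv1_two_binaryForm]
    convert map_zero (binaryForm ℂ 4)
    ext i
    fin_cases i <;> simp <;> norm_num

/-- **Surjectivity of `T^{(1,2)}(H, •) : V_{1,2} → V_{0,4}` for
`H = X₁X₂³Y₂³ + Y₁(X₂⁴Y₂² + X₂²Y₂⁴) ∈ V_{1,6}`.**  Equivalently, since
`dim V_{1,2} = 6 = dim V_{0,4} + 1`, its kernel is one-dimensional. -/
theorem transvectant_16_surjective :
    (∀ R ∈ homogeneousSubmodule (Fin 2) ℂ 4,
      ∃ PQ ∈ (homogeneousSubmodule (Fin 2) ℂ 2).prod (homogeneousSubmodule (Fin 2) ℂ 2),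
        transv1 2 (X 0 ^ 3 * X 1 ^ 3, X 0 ^ 4 * X 1 ^ 2 + X 0 ^ 2 * X 1 ^ 4) PQ = R) ∧
    Module.finrank ℂ
      ↥((homogeneousSubmodule (Fin 2) ℂ 2).prod (homogeneousSubmodule (Fin 2) ℂ 2) ⊓
        LinearMap.ker (transv1 2 (X 0 ^ 3 * X 1 ^ 3, X 0 ^ 4 * X 1 ^ 2 + X 0 ^ 2 * X 1 ^ 4))) = 1 := by
  refine ⟨fun R hR => ?_, ?_⟩
  · obtain ⟨r, rfl⟩ := (range_binaryForm ℂ 4).ge hR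
    refine ⟨(binaryForm ℂ 2 ![-r 0 / 4, 0, -r 4 / 4],
        binaryForm ℂ 2 ![r 1 / 12, (6 * r 0 + 6 * r 4 - r 2) / 18, r 3 / 12]),
      ⟨binaryForm_mem_homogeneousSubmodule _, binaryForm_mem_homogeneousSubmodule _⟩, ?_⟩
    rw [transv1_two_binaryForm]
    congr 1
    ext i
    fin_cases i <;> simp <;> ring
  · rw [inf_ker_transv1_two_eq_span, finrank_span_singleton]
    have hv : (![0, 3, 0] : Fin 3 → ℂ) ≠ 0 := fun h => by simpa using congr_fun h 1
    exact fun h => hv ((map_eq_zero_iff _ (binaryForm_injective ℂ 2)).1 (congr_arg Prod.fst h))
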